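/- arXiv:2407.11426 — 2 statements merged into one kernel-verified Lean document; each statement's English description precedes it below -/
import Mathlib

section
/- With the same setup (logistic loss, ‖x‖₂ ≤ B, ‖θ‖₂ ≤ 1), the loss is left ξ-admissible with ξ = 1/(exp(B) + 1): for all θ₁, θ₂ and z = (x,y), |f(θ₁,z) − f(θ₂,z)| ≥ ξ·|⟨x, θ₁⟩ − ⟨x, θ₂⟩|. -/
open Real RealInnerProductSpace

lemma logistic_hasDerivAt (y t : ℝ) :
    HasDerivAt (fun s : ℝ => Real.log (1 + Real.exp (-y * s)))
      (-y * Real.exp (-y * t) / (1 + Real.exp (-y * t))) t := by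
  have h1 : HasDerivAt (fun s : ℝ => -y * s) (-y) t := by
    simpa using (hasDerivAt_id t).const_mul (-y)
  have h2 : HasDerivAt (fun s : ℝ => 1 + Real.exp (-y * s))
      (Real.exp (-y * t) * (-y)) t := ((h1.exp)).const_add 1
  have hpos : 1 + Real.exp (-y * t) ≠ 0 := by positivity
  have := h2.log hpos
  convert this using 1
  ring

lemma key_lemma (B y : ℝ) (hy : y = 1 ∨ y = -1) (a b : ℝ)
    (ha : |a| ≤ B) (hb : |b| ≤ B) (hab : a < b) :
    (1 / (Real.exp B + 1)) * (b - a) ≤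
      |Real.log (1 + Real.exp (-y * b)) - Real.log (1 + Real.exp (-y * a))| := by
  set g := fun s : ℝ => Real.log (1 + Real.exp (-y * s)) with hg
  obtain ⟨c, hc, hslope⟩ := exists_hasDerivAt_eq_slope g
    (fun t => -y * Real.exp (-y * t) / (1 + Real.exp (-y * t))) hab
    (fun t _ => (logistic_hasDerivAt y t).continuousAt.continuousWithinAt)
    (fun t _ => logistic_hasDerivAt y t)
  have hba : (0:ℝ) < b - a := by linarith
  have hgb : g b - g a = (-y * Real.exp (-y * c) / (1 + Real.exp (-y * c))) * (b - a) := by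
    field_simp at hslope ⊢
    linarith [hslope]
  have hy1 : |y| = 1 := by rcases hy with h | h <;> simp [h]
  have hcB : y * c ≤ B := by
    have h1 : |c| ≤ B := by
      rw [abs_le] at ha hb ⊢
      constructor <;> [linarith [hc.1, ha.1]; linarith [hc.2, hb.2]]
    calc y * c ≤ |y * c| := le_abs_self _
      _ = |c| := by rw [abs_mul, hy1, one_mul]
      _ ≤ B := h1
  have hepos : (0:ℝ) < Real.exp (-y * c) := Real.exp_pos _
  have hdabs : |(-y * Real.exp (-y * c) / (1 + Real.exp (-y * c)))|
      = 1 / (Real.exp (y * c) + 1) := by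
    rw [abs_div, abs_mul, abs_neg, hy1, one_mul,
      abs_of_pos hepos, abs_of_pos (by positivity : (0:ℝ) < 1 + Real.exp (-y * c))]
    rw [div_eq_div_iff (by positivity) (by positivity)]
    have : Real.exp (-y * c) * Real.exp (y * c) = 1 := by
      rw [← Real.exp_add]; simp
    ring_nf at this ⊢
    nlinarith [this]
  have hξ : (1 / (Real.exp B + 1)) ≤ 1 / (Real.exp (y * c) + 1) := by
    apply div_le_div_of_nonneg_left one_pos.le (by positivity)
    have := Real.exp_le_exp.mpr hcB
    linarith
  calc (1 / (Real.exp B + 1)) * (b - a)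
      ≤ (1 / (Real.exp (y * c) + 1)) * (b - a) := by
        apply mul_le_mul_of_nonneg_right hξ hba.le
    _ = |(-y * Real.exp (-y * c) / (1 + Real.exp (-y * c)))| * (b - a) := by rw [hdabs]
    _ = |g b - g a| := by
        rw [hgb, abs_mul, abs_of_pos hba]
    _ = |Real.log (1 + Real.exp (-y * b)) - Real.log (1 + Real.exp (-y * a))| := rfl

/-- the logistic loss is left ξ-admissible with ξ = 1/(exp(B) + 1):
|f(θ₁,z) − f(θ₂,z)| ≥ ξ·|⟨x,θ₁⟩ − ⟨x,θ₂⟩| when ‖x‖ ≤ B, ‖θᵢ‖ ≤ 1, y ∈ {−1, 1}. -/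
theorem logistic_loss_left_admissible
    {d : ℕ} (B : ℝ) (hB : 0 < B)
    (x : EuclideanSpace ℝ (Fin d)) (hx : ‖x‖ ≤ B)
    (y : ℝ) (hy : y = 1 ∨ y = -1)
    (θ₁ θ₂ : EuclideanSpace ℝ (Fin d)) (hθ₁ : ‖θ₁‖ ≤ 1) (hθ₂ : ‖θ₂‖ ≤ 1) :
    (1 / (Real.exp B + 1)) * |⟪x, θ₁⟫ - ⟪x, θ₂⟫| ≤
      |Real.log (1 + Real.exp (-y * ⟪x, θ₁⟫)) - Real.log (1 + Real.exp (-y * ⟪x, θ₂⟫))| := by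
  set t₁ := ⟪x, θ₁⟫ with ht₁
  set t₂ := ⟪x, θ₂⟫ with ht₂
  have hbound : ∀ (θ : EuclideanSpace ℝ (Fin d)), ‖θ‖ ≤ 1 → |⟪x, θ⟫| ≤ B := by
    intro θ hθ
    calc |⟪x, θ⟫| ≤ ‖x‖ * ‖θ‖ := abs_real_inner_le_norm x θ
      _ ≤ B * 1 := mul_le_mul hx hθ (norm_nonneg _) hB.le
      _ = B := mul_one B
  have h1 : |t₁| ≤ B := hbound θ₁ hθ₁
  have h2 : |t₂| ≤ B := hbound θ₂ hθ₂
  rcases lt_trichotomy t₁ t₂ with h | h | h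
  · have := key_lemma B y hy t₁ t₂ h1 h2 h
    rw [abs_sub_comm] at this ⊢
    rwa [abs_of_pos (by linarith : (0:ℝ) < t₂ - t₁)]
  · simp [h]
  · have := key_lemma B y hy t₂ t₁ h2 h1 h
    rwa [abs_of_pos (by linarith : (0:ℝ) < t₁ - t₂)]
end

section
/- Suppose two sequences of parameters θ^m_t, θ^M_t in Θ ⊆ ℝ^p start from the same initialization θ^m_1 = θ^M_1 and evolve by updates θ_{t+1} = G_t(θ_t) and θ_{t+1} = G'_t(θ_t) respectively for t = 1,...,n, where G_t = G'_t for t ≤ n − r, each G_t is 1-expansive, and each G_t, G'_t is (η_t L)-bounded. Then ‖θ^m_{n+1} − θ^M_{n+1}‖₂ ≤ 2L·∑_{t=n−r+1}^{n} η_t. -/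
open Real Finset

/-- two update sequences with the same initialization, identical updates for
the first n − r steps, 1-expansive updates, and (η_t L)-bounded updates, end up within
2L·∑_{t=n−r+1}^{n} η_t of each other after n steps.  (Steps are indexed t = 1,…,n.) -/
theorem parameter_divergence_bound
    {p : ℕ} (n r : ℕ) (hr : r ≤ n)
    (G G' : ℕ → EuclideanSpace ℝ (Fin p) → EuclideanSpace ℝ (Fin p))
    (η : ℕ → ℝ) (hη : ∀ t, 0 ≤ η t)
    (L : ℝ) (hL : 0 ≤ L)
    (θm θM : ℕ → EuclideanSpace ℝ (Fin p))
    (hinit : θm 1 = θM 1)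
    (hstepm : ∀ t, 1 ≤ t → t ≤ n → θm (t + 1) = G t (θm t))
    (hstepM : ∀ t, 1 ≤ t → t ≤ n → θM (t + 1) = G' t (θM t))
    (hsame : ∀ t, 1 ≤ t → t ≤ n - r → G t = G' t)
    (hexp : ∀ t, 1 ≤ t → t ≤ n → ∀ a b, ‖G t a - G t b‖ ≤ ‖a - b‖)
    (hbd : ∀ t, 1 ≤ t → t ≤ n → ∀ θ, ‖θ - G t θ‖ ≤ η t * L)
    (hbd' : ∀ t, 1 ≤ t → t ≤ n → ∀ θ, ‖θ - G' t θ‖ ≤ η t * L) :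
    ‖θm (n + 1) - θM (n + 1)‖ ≤ 2 * L * ∑ t ∈ Finset.Icc (n - r + 1) n, η t := by
  have key : ∀ t, 1 ≤ t → t ≤ n + 1 →
      ‖θm t - θM t‖ ≤ 2 * L * ∑ s ∈ Finset.Icc (n - r + 1) (t - 1), η s := by
    intro t
    induction t with
    | zero => intro h; omega
    | succ t ih =>
      intro _ ht
      rcases Nat.eq_zero_or_pos t with h0 | hpos
      · subst h0
        simp [hinit, Finset.Icc_eq_empty_of_lt (by omega : (0:ℕ) < n - r + 1)]
      have htn : t ≤ n := by omega
      have ih' := ih hpos (by omega)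
      rw [hstepm t hpos htn, hstepM t hpos htn]
      simp only [Nat.add_sub_cancel]
      by_cases hcase : t ≤ n - r
      · rw [← hsame t hpos hcase]
        have hempty : Finset.Icc (n - r + 1) t = ∅ :=
          Finset.Icc_eq_empty_of_lt (by omega)
        have hempty' : Finset.Icc (n - r + 1) (t - 1) = ∅ :=
          Finset.Icc_eq_empty_of_lt (by omega)
        rw [hempty]
        calc ‖G t (θm t) - G t (θM t)‖ ≤ ‖θm t - θM t‖ := hexp t hpos htn _ _
          _ ≤ 2 * L * ∑ s ∈ Finset.Icc (n - r + 1) (t - 1), η s := ih'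
          _ = 2 * L * ∑ s ∈ (∅ : Finset ℕ), η s := by rw [hempty']
      · have hmem : n - r + 1 ≤ t := by omega
        have hsum : ∑ s ∈ Finset.Icc (n - r + 1) t, η s
            = ∑ s ∈ Finset.Icc (n - r + 1) (t - 1), η s + η t := by
          have : Finset.Icc (n - r + 1) t = insert t (Finset.Icc (n - r + 1) (t - 1)) := by
            ext x
            simp only [Finset.mem_insert, Finset.mem_Icc]
            omega
          rw [this, Finset.sum_insert (by simp [Finset.mem_Icc]; omega)]
          ring
        rw [hsum]
        have h1 : ‖G t (θm t) - G' t (θM t)‖ ≤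
            ‖G t (θm t) - G t (θM t)‖ + ‖G t (θM t) - θM t‖ + ‖θM t - G' t (θM t)‖ := by
          have := norm_add₃_le (a := G t (θm t) - G t (θM t)) (b := G t (θM t) - θM t)
            (c := θM t - G' t (θM t))
          simpa using this
        have h2 : ‖G t (θM t) - θM t‖ ≤ η t * L := by
          rw [norm_sub_rev]; exact hbd t hpos htn _
        have h3 := hbd' t hpos htn (θM t)
        calc ‖G t (θm t) - G' t (θM t)‖
            ≤ ‖θm t - θM t‖ + η t * L + η t * L := by
              refine h1.trans ?_
              gcongr
              exact hexp t hpos htn _ _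
          _ ≤ 2 * L * ∑ s ∈ Finset.Icc (n - r + 1) (t - 1), η s + η t * L + η t * L := by
              gcongr
          _ = 2 * L * (∑ s ∈ Finset.Icc (n - r + 1) (t - 1), η s + η t) := by ring
  have := key (n + 1) (by omega) le_rfl
  simpa using this
end
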